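/- For any constant c : Bool, any F : (Fin n → Bool) → Bool, and any i : Fin n, the function G x = if x i then c₁* else c₀* — where c₀* and c₁* are optimal constants for the cofactors F|_{x i = false} and F|_{x i = true} respectively — agrees with F on at least as many inputs as the constant function c does. -/

import Mathlib

/-! Agreements with `F` split over the two cofactors `b x = false` and `b x = true`; on each of
them the expansion plays an optimal constant, which agrees with `F` at least as often as `c`. -/

namespace Finset

variable {α β : Type*} [DecidableEq β] (s : Finset α) (b : α → Bool)

theorem card_filter_eq_card_filter_false_add_card_filter_true (p : α → Prop) [DecidablePred p] :
    #(s.filter p) =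
      #(s.filter fun x => b x = false ∧ p x) + #(s.filter fun x => b x = true ∧ p x) := by
  rw [← card_filter_add_card_filter_not (s := s.filter p) (p := fun x => b x = false)]
  simp only [filter_filter, Bool.not_eq_false, and_comm]

theorem filter_and_ite_eq (F : α → β) (v : Bool) (c₀ c₁ : β) :
    (s.filter fun x => b x = v ∧ (if b x then c₁ else c₀) = F x) =
      s.filter fun x => b x = v ∧ F x = if v then c₁ else c₀ := by
  refine filter_congr fun x _ => ?_
  constructor <;> rintro ⟨rfl, h⟩ <;> exact ⟨rfl, h.symm⟩

theorem card_filter_const_eq_le_card_filter_ite_eq (F : α → β) (c c₀ c₁ : β)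
    (h₀ : ∀ c' : β, #(s.filter fun x => b x = false ∧ F x = c') ≤
      #(s.filter fun x => b x = false ∧ F x = c₀))
    (h₁ : ∀ c' : β, #(s.filter fun x => b x = true ∧ F x = c') ≤
      #(s.filter fun x => b x = true ∧ F x = c₁)) :
    #(s.filter fun x => c = F x) ≤ #(s.filter fun x => (if b x then c₁ else c₀) = F x) := by
  rw [card_filter_eq_card_filter_false_add_card_filter_true s b (fun x => c = F x),
    card_filter_eq_card_filter_false_add_card_filter_true s b
      (fun x => (if b x then c₁ else c₀) = F x),
    filter_and_ite_eq, filter_and_ite_eq]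
  simp only [eq_comm (a := c), Bool.false_eq_true, if_true, if_false]
  exact add_le_add (h₀ c) (h₁ c)

end Finset

theorem expansion_beats_constant (n : ℕ) (F : (Fin n → Bool) → Bool) (i : Fin n)
    (c c₀ c₁ : Bool)
    (h₀ : ∀ c' : Bool,
      (Finset.univ.filter (fun x : Fin n → Bool => x i = false ∧ F x = c')).card ≤
      (Finset.univ.filter (fun x : Fin n → Bool => x i = false ∧ F x = c₀)).card)
    (h₁ : ∀ c' : Bool,
      (Finset.univ.filter (fun x : Fin n → Bool => x i = true ∧ F x = c')).card ≤
      (Finset.univ.filter (fun x : Fin n → Bool => x i = true ∧ F x = c₁)).card) :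
    (Finset.univ.filter (fun x : Fin n → Bool => c = F x)).card ≤
      (Finset.univ.filter
        (fun x : Fin n → Bool => (if x i then c₁ else c₀) = F x)).card :=
  Finset.card_filter_const_eq_le_card_filter_ite_eq _ (fun x => x i) F c c₀ c₁ h₀ h₁
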